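/- arXiv:1704.08702 — 5 statements merged into one kernel-verified Lean document; each statement's English description precedes it below -/
import Mathlib

section
/- Let d_S, d_1, d_2 be positive integers. On ℂ^{d_S} ⊗ ℂ^{d_1} ⊗ ℂ^{d_2} consider H_T = h_S⊗1⊗1 + G_1 + G_2, where h_S is a Hermitian d_S×d_S matrix, G_1 is Hermitian of the form g_1 ⊗ 1_{d_2} with g_1 Hermitian on ℂ^{d_S}⊗ℂ^{d_1} (so G_1 acts nontrivially only on the first and second factors), and G_2 is Hermitian acting nontrivially only on the first and third factors (i.e. obtained from a Hermitian g_2 on ℂ^{d_S}⊗ℂ^{d_2}). Assume G_1 G_2 = G_2 G_1 and G_a (h_S⊗1⊗1) = (h_S⊗1⊗1) G_a for a = 1,2. Let ρ be a d_S×d_S matrix and ρ_1, ρ_2 be d_1×d_1 and d_2×d_2 matrices. Then for all t: Tr_{E_1E_2}[ e^{−iH_T t} (ρ⊗ρ_1⊗ρ_2) e^{iH_T t} ] = e^{−ih_S t} Λ̃^{(2)}_t( Λ̃^{(1)}_t(ρ) ) e^{ih_S t}, where Λ̃^{(a)}_t(ρ) := Tr_{E_a}[ e^{−i g_a t} (ρ⊗ρ_a)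 e^{i g_a t} ]; moreover Λ̃^{(1)}_t ∘ Λ̃^{(2)}_t = Λ̃^{(2)}_t ∘ Λ̃^{(1)}_t. -/
open Matrix

/-- Tensor product `ρ ⊗ ρE` of a system matrix with an environment matrix. -/
noncomputable def kron2 (d dE : ℕ)
    (ρ : Matrix (Fin d) (Fin d) ℂ) (ρE : Matrix (Fin dE) (Fin dE) ℂ) :
    Matrix (Fin d × Fin dE) (Fin d × Fin dE) ℂ :=
  Matrix.of fun x y => ρ x.1 y.1 * ρE x.2 y.2

/-- Partial trace over the environment factor. -/
noncomputable def trEnv (d dE : ℕ)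
    (M : Matrix (Fin d × Fin dE) (Fin d × Fin dE) ℂ) :
    Matrix (Fin d) (Fin d) ℂ :=
  Matrix.of fun a b => ∑ k : Fin dE, M (a, k) (b, k)

/-- Tensor product `ρ ⊗ ρ₁ ⊗ ρ₂` on `ℂ^{dS} ⊗ ℂ^{d1} ⊗ ℂ^{d2}`. -/
noncomputable def kron3 (dS d1 d2 : ℕ)
    (ρ : Matrix (Fin dS) (Fin dS) ℂ) (ρ1 : Matrix (Fin d1) (Fin d1) ℂ)
    (ρ2 : Matrix (Fin d2) (Fin d2) ℂ) :
    Matrix (Fin dS × Fin d1 × Fin d2) (Fin dS × Fin d1 × Fin d2) ℂ :=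
  Matrix.of fun x y => ρ x.1 y.1 * ρ1 x.2.1 y.2.1 * ρ2 x.2.2 y.2.2

/-- Partial trace over both environment factors of
`ℂ^{dS} ⊗ ℂ^{d1} ⊗ ℂ^{d2}`. -/
noncomputable def trE12 (dS d1 d2 : ℕ)
    (M : Matrix (Fin dS × Fin d1 × Fin d2) (Fin dS × Fin d1 × Fin d2) ℂ) :
    Matrix (Fin dS) (Fin dS) ℂ :=
  Matrix.of fun a b => ∑ k : Fin d1, ∑ l : Fin d2, M (a, k, l) (b, k, l)

/-- Embedding `h_S ⊗ 1 ⊗ 1` of a system operator. -/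
noncomputable def embS (dS d1 d2 : ℕ) (h : Matrix (Fin dS) (Fin dS) ℂ) :
    Matrix (Fin dS × Fin d1 × Fin d2) (Fin dS × Fin d1 × Fin d2) ℂ :=
  Matrix.of fun x y => h x.1 y.1 * (if x.2.1 = y.2.1 then 1 else 0) *
    (if x.2.2 = y.2.2 then 1 else 0)

/-- Embedding `g₁ ⊗ 1_{d2}` of an operator acting on the system and the first
environment. -/
noncomputable def emb1 (dS d1 d2 : ℕ)
    (g : Matrix (Fin dS × Fin d1) (Fin dS × Fin d1) ℂ) :
    Matrix (Fin dS × Fin d1 × Fin d2) (Fin dS × Fin d1 × Fin d2) ℂ :=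
  Matrix.of fun x y => g (x.1, x.2.1) (y.1, y.2.1) * (if x.2.2 = y.2.2 then 1 else 0)

/-- Embedding of an operator acting on the system and the second environment. -/
noncomputable def emb2 (dS d1 d2 : ℕ)
    (g : Matrix (Fin dS × Fin d2) (Fin dS × Fin d2) ℂ) :
    Matrix (Fin dS × Fin d1 × Fin d2) (Fin dS × Fin d1 × Fin d2) ℂ :=
  Matrix.of fun x y => g (x.1, x.2.2) (y.1, y.2.2) * (if x.2.1 = y.2.1 then 1 else 0)

/-- The single-environment dynamical map
`Λ̃_t(ρ) = Tr_E[e^{-igt}(ρ ⊗ ρE)e^{igt}]`. -/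
noncomputable def envMap (d dE : ℕ)
    (g : Matrix (Fin d × Fin dE) (Fin d × Fin dE) ℂ)
    (ρE : Matrix (Fin dE) (Fin dE) ℂ) (t : ℝ)
    (ρ : Matrix (Fin d) (Fin d) ℂ) : Matrix (Fin d) (Fin d) ℂ :=
  trEnv d dE (NormedSpace.exp ((-(Complex.I * (t : ℂ))) • g) * kron2 d dE ρ ρE *
    NormedSpace.exp ((Complex.I * (t : ℂ)) • g))

/-! ### Auxiliary material -/

section rot
variable {A B C D E F : Type*} [Fintype A] [Fintype B] [Fintype C] [Fintype D] [Fintype E]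
  [Fintype F]

private lemma rot2 (f : A → B → ℂ) : ∑ a, ∑ b, f a b = ∑ b, ∑ a, f a b := Finset.sum_comm

private lemma rot3 (f : A → B → C → ℂ) :
    ∑ a, ∑ b, ∑ c, f a b c = ∑ b, ∑ c, ∑ a, f a b c := by
  rw [Finset.sum_comm]; exact Finset.sum_congr rfl fun b _ => rot2 fun a c => f a b c

private lemma rot4 (f : A → B → C → D → ℂ) :
    ∑ a, ∑ b, ∑ c, ∑ d, f a b c d = ∑ b, ∑ c, ∑ d, ∑ a, f a b c d := by
  rw [Finset.sum_comm]; exact Finset.sum_congr rfl fun b _ => rot3 fun a c d => f a b c d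

private lemma rot5 (f : A → B → C → D → E → ℂ) :
    ∑ a, ∑ b, ∑ c, ∑ d, ∑ e, f a b c d e = ∑ b, ∑ c, ∑ d, ∑ e, ∑ a, f a b c d e := by
  rw [Finset.sum_comm]; exact Finset.sum_congr rfl fun b _ => rot4 fun a c d e => f a b c d e

private lemma rot6 (f : A → B → C → D → E → F → ℂ) :
    ∑ a, ∑ b, ∑ c, ∑ d, ∑ e, ∑ x, f a b c d e x
      = ∑ b, ∑ c, ∑ d, ∑ e, ∑ x, ∑ a, f a b c d e x := by
  rw [Finset.sum_comm]; exact Finset.sum_congr rfl fun b _ => rot5 fun a c d e x => f a b c d e x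
end rot

section Aux
variable (dS d1 d2 : ℕ)

/-- middle factor `ρ1` inserted: `M` acts on `dS ⊗ d2`. -/
private noncomputable def midA (M : Matrix (Fin dS × Fin d2) (Fin dS × Fin d2) ℂ)
    (ρ1 : Matrix (Fin d1) (Fin d1) ℂ) :
    Matrix (Fin dS × Fin d1 × Fin d2) (Fin dS × Fin d1 × Fin d2) ℂ :=
  Matrix.of fun x y => M (x.1, x.2.2) (y.1, y.2.2) * ρ1 x.2.1 y.2.1

/-- last factor `ρ2` inserted: `M` acts on `dS ⊗ d1`. -/
private noncomputable def midB (M : Matrix (Fin dS × Fin d1) (Fin dS × Fin d1) ℂ)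
    (ρ2 : Matrix (Fin d2) (Fin d2) ℂ) :
    Matrix (Fin dS × Fin d1 × Fin d2) (Fin dS × Fin d1 × Fin d2) ℂ :=
  Matrix.of fun x y => M (x.1, x.2.1) (y.1, y.2.1) * ρ2 x.2.2 y.2.2

variable (ρ : Matrix (Fin dS) (Fin dS) ℂ) (ρ1 : Matrix (Fin d1) (Fin d1) ℂ)
  (ρ2 : Matrix (Fin d2) (Fin d2) ℂ)

private lemma kron3_eq_midA : kron3 dS d1 d2 ρ ρ1 ρ2 = midA dS d1 d2 (kron2 dS d2 ρ ρ2) ρ1 := by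
  ext ⟨a, k, l⟩ ⟨b, m, n⟩; simp [kron3, midA, kron2]; ring

private lemma kron3_eq_midB : kron3 dS d1 d2 ρ ρ1 ρ2 = midB dS d1 d2 (kron2 dS d1 ρ ρ1) ρ2 := by
  ext ⟨a, k, l⟩ ⟨b, m, n⟩; simp [kron3, midB, kron2]

private lemma emb1_mul_midB (X : Matrix (Fin dS × Fin d1) (Fin dS × Fin d1) ℂ) (M) :
    emb1 dS d1 d2 X * midB dS d1 d2 M ρ2 = midB dS d1 d2 (X * M) ρ2 := by
  ext ⟨a, k, l⟩ ⟨b, m, n⟩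
  simp [emb1, midB, Matrix.mul_apply, Fintype.sum_prod_type, mul_ite, ite_mul, mul_zero,
    zero_mul, mul_one, Finset.mul_sum, Finset.sum_mul]
  first
  | (refine Finset.sum_congr rfl fun c _ => Finset.sum_congr rfl fun p _ => ?_; ring)
  | (rw [Finset.sum_comm]; refine Finset.sum_congr rfl fun c _ => Finset.sum_congr rfl fun p _ => ?_; ring)

private lemma midB_mul_emb1 (X : Matrix (Fin dS × Fin d1) (Fin dS × Fin d1) ℂ) (M) :
    midB dS d1 d2 M ρ2 * emb1 dS d1 d2 X = midB dS d1 d2 (M * X) ρ2 := by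
  ext ⟨a, k, l⟩ ⟨b, m, n⟩
  simp [emb1, midB, Matrix.mul_apply, Fintype.sum_prod_type, mul_ite, ite_mul, mul_zero,
    zero_mul, mul_one, Finset.mul_sum, Finset.sum_mul]
  first
  | (refine Finset.sum_congr rfl fun c _ => Finset.sum_congr rfl fun p _ => ?_; ring)
  | (rw [Finset.sum_comm]; refine Finset.sum_congr rfl fun c _ => Finset.sum_congr rfl fun p _ => ?_; ring)

private lemma emb2_mul_midA (Y : Matrix (Fin dS × Fin d2) (Fin dS × Fin d2) ℂ) (M) :
    emb2 dS d1 d2 Y * midA dS d1 d2 M ρ1 = midA dS d1 d2 (Y * M) ρ1 := by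
  ext ⟨a, k, l⟩ ⟨b, m, n⟩
  simp [emb2, midA, Matrix.mul_apply, Fintype.sum_prod_type, mul_ite, ite_mul, mul_zero,
    zero_mul, mul_one, Finset.mul_sum, Finset.sum_mul]
  first
  | (refine Finset.sum_congr rfl fun c _ => Finset.sum_congr rfl fun p _ => ?_; ring)
  | (rw [Finset.sum_comm]; refine Finset.sum_congr rfl fun c _ => Finset.sum_congr rfl fun p _ => ?_; ring)

private lemma midA_mul_emb2 (Y : Matrix (Fin dS × Fin d2) (Fin dS × Fin d2) ℂ) (M) :
    midA dS d1 d2 M ρ1 * emb2 dS d1 d2 Y = midA dS d1 d2 (M * Y) ρ1 := by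
  ext ⟨a, k, l⟩ ⟨b, m, n⟩
  simp [emb2, midA, Matrix.mul_apply, Fintype.sum_prod_type, mul_ite, ite_mul, mul_zero,
    zero_mul, mul_one, Finset.mul_sum, Finset.sum_mul]
  first
  | (refine Finset.sum_congr rfl fun c _ => Finset.sum_congr rfl fun p _ => ?_; ring)
  | (rw [Finset.sum_comm]; refine Finset.sum_congr rfl fun c _ => Finset.sum_congr rfl fun p _ => ?_; ring)

private lemma trE12_emb2_midB (Y Y' : Matrix (Fin dS × Fin d2) (Fin dS × Fin d2) ℂ) (M) :
    trE12 dS d1 d2 (emb2 dS d1 d2 Y * midB dS d1 d2 M ρ2 * emb2 dS d1 d2 Y')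
      = trEnv dS d2 (Y * kron2 dS d2 (trEnv dS d1 M) ρ2 * Y') := by
  ext a b
  simp [trE12, trEnv, emb2, midB, kron2, Matrix.mul_apply, Fintype.sum_prod_type, mul_ite,
    ite_mul, mul_zero, zero_mul, mul_one, Finset.mul_sum, Finset.sum_mul]
  rw [rot6 (fun (x : Fin d1) (x1 : Fin d2) (x2 : Fin dS) (x3 : Fin d2) (x4 : Fin dS)
      (x5 : Fin d2) => Y (a, x1) (x4, x5) * (M (x4, x) (x2, x) * ρ2 x5 x3) * Y' (x2, x3) (b, x1))]

private lemma trE12_emb1_midA (X X' : Matrix (Fin dS × Fin d1) (Fin dS × Fin d1) ℂ) (M) :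
    trE12 dS d1 d2 (emb1 dS d1 d2 X * midA dS d1 d2 M ρ1 * emb1 dS d1 d2 X')
      = trEnv dS d1 (X * kron2 dS d1 (trEnv dS d2 M) ρ1 * X') := by
  ext a b
  simp [trE12, trEnv, emb1, midA, kron2, Matrix.mul_apply, Fintype.sum_prod_type, mul_ite,
    ite_mul, mul_zero, zero_mul, mul_one, Finset.mul_sum, Finset.sum_mul]
  refine Finset.sum_congr rfl fun x _ => ?_
  rw [rot5 (fun (x1 : Fin d2) (x2 : Fin dS) (x3 : Fin d1) (x4 : Fin dS) (x5 : Fin d1) =>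
    X (a, x) (x4, x5) * (M (x4, x1) (x2, x1) * ρ1 x5 x3) * X' (x2, x3) (b, x))]

private lemma trE12_conj_embS (U V : Matrix (Fin dS) (Fin dS) ℂ) (M) :
    trE12 dS d1 d2 (embS dS d1 d2 U * M * embS dS d1 d2 V) = U * trE12 dS d1 d2 M * V := by
  ext a b
  simp [trE12, embS, Matrix.mul_apply, Fintype.sum_prod_type, mul_ite, ite_mul, mul_zero,
    zero_mul, mul_one, Finset.mul_sum, Finset.sum_mul]
  rw [rot4 (fun (x : Fin d1) (x1 : Fin d2) (x2 : Fin dS) (x3 : Fin dS) =>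
    U a x3 * M (x3, x, x1) (x2, x, x1) * V x2 b)]
  rw [rot4 (fun (x1 : Fin d2) (x2 : Fin dS) (x3 : Fin dS) (x : Fin d1) =>
    U a x3 * M (x3, x, x1) (x2, x, x1) * V x2 b)]

private lemma embS_one : embS dS d1 d2 1 = 1 := by
  ext ⟨a, k, l⟩ ⟨b, m, n⟩
  simp [embS, Matrix.one_apply, Prod.ext_iff]
  split_ifs <;> simp_all

private lemma emb1_one : emb1 dS d1 d2 1 = 1 := by
  ext ⟨a, k, l⟩ ⟨b, m, n⟩
  simp [emb1, Matrix.one_apply, Prod.ext_iff]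
  split_ifs <;> simp_all

private lemma emb2_one : emb2 dS d1 d2 1 = 1 := by
  ext ⟨a, k, l⟩ ⟨b, m, n⟩
  simp [emb2, Matrix.one_apply, Prod.ext_iff]
  split_ifs <;> simp_all

private lemma embS_mul (h h' : Matrix (Fin dS) (Fin dS) ℂ) :
    embS dS d1 d2 (h * h') = embS dS d1 d2 h * embS dS d1 d2 h' := by
  ext ⟨a, k, l⟩ ⟨b, m, n⟩
  simp [embS, Matrix.mul_apply, Fintype.sum_prod_type, mul_ite, ite_mul, mul_zero, zero_mul,
    mul_one, Finset.mul_sum, Finset.sum_mul]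

private lemma emb1_mul (g g' : Matrix (Fin dS × Fin d1) (Fin dS × Fin d1) ℂ) :
    emb1 dS d1 d2 (g * g') = emb1 dS d1 d2 g * emb1 dS d1 d2 g' := by
  ext ⟨a, k, l⟩ ⟨b, m, n⟩
  simp [emb1, Matrix.mul_apply, Fintype.sum_prod_type, mul_ite, ite_mul, mul_zero, zero_mul,
    mul_one, Finset.mul_sum, Finset.sum_mul]

private lemma emb2_mul (g g' : Matrix (Fin dS × Fin d2) (Fin dS × Fin d2) ℂ) :
    emb2 dS d1 d2 (g * g') = emb2 dS d1 d2 g * emb2 dS d1 d2 g' := by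
  ext ⟨a, k, l⟩ ⟨b, m, n⟩
  simp [emb2, Matrix.mul_apply, Fintype.sum_prod_type, mul_ite, ite_mul, mul_zero, zero_mul,
    mul_one, Finset.mul_sum, Finset.sum_mul]

private lemma embS_add (h h' : Matrix (Fin dS) (Fin dS) ℂ) :
    embS dS d1 d2 (h + h') = embS dS d1 d2 h + embS dS d1 d2 h' := by
  ext ⟨a, k, l⟩ ⟨b, m, n⟩; simp [embS]; try (split_ifs <;> ring)

private lemma emb1_add (g g') : emb1 dS d1 d2 (g + g') = emb1 dS d1 d2 g + emb1 dS d1 d2 g' := by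
  ext ⟨a, k, l⟩ ⟨b, m, n⟩; simp [emb1]; try (split_ifs <;> ring)

private lemma emb2_add (g g') : emb2 dS d1 d2 (g + g') = emb2 dS d1 d2 g + emb2 dS d1 d2 g' := by
  ext ⟨a, k, l⟩ ⟨b, m, n⟩; simp [emb2]; try (split_ifs <;> ring)

private lemma embS_smul (c : ℂ) (h) : embS dS d1 d2 (c • h) = c • embS dS d1 d2 h := by
  ext ⟨a, k, l⟩ ⟨b, m, n⟩; simp [embS]; try (split_ifs <;> ring)

private lemma emb1_smul (c : ℂ) (g) : emb1 dS d1 d2 (c • g) = c • emb1 dS d1 d2 g := by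
  ext ⟨a, k, l⟩ ⟨b, m, n⟩; simp [emb1]; try (split_ifs <;> ring)

private lemma emb2_smul (c : ℂ) (g) : emb2 dS d1 d2 (c • g) = c • emb2 dS d1 d2 g := by
  ext ⟨a, k, l⟩ ⟨b, m, n⟩; simp [emb2]; try (split_ifs <;> ring)

private lemma embS_zero : embS dS d1 d2 0 = 0 := by ext ⟨a,k,l⟩ ⟨b,m,n⟩; simp [embS]

private lemma emb1_zero : emb1 dS d1 d2 0 = 0 := by ext ⟨a,k,l⟩ ⟨b,m,n⟩; simp [emb1]

private lemma emb2_zero : emb2 dS d1 d2 0 = 0 := by ext ⟨a,k,l⟩ ⟨b,m,n⟩; simp [emb2]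

private noncomputable def embSHom : Matrix (Fin dS) (Fin dS) ℂ →+*
    Matrix (Fin dS × Fin d1 × Fin d2) (Fin dS × Fin d1 × Fin d2) ℂ where
  toFun := embS dS d1 d2
  map_one' := embS_one dS d1 d2
  map_mul' := embS_mul dS d1 d2
  map_zero' := embS_zero dS d1 d2
  map_add' := embS_add dS d1 d2

private noncomputable def emb1Hom : Matrix (Fin dS × Fin d1) (Fin dS × Fin d1) ℂ →+*
    Matrix (Fin dS × Fin d1 × Fin d2) (Fin dS × Fin d1 × Fin d2) ℂ where
  toFun := emb1 dS d1 d2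
  map_one' := emb1_one dS d1 d2
  map_mul' := emb1_mul dS d1 d2
  map_zero' := emb1_zero dS d1 d2
  map_add' := emb1_add dS d1 d2

private noncomputable def emb2Hom : Matrix (Fin dS × Fin d2) (Fin dS × Fin d2) ℂ →+*
    Matrix (Fin dS × Fin d1 × Fin d2) (Fin dS × Fin d1 × Fin d2) ℂ where
  toFun := emb2 dS d1 d2
  map_one' := emb2_one dS d1 d2
  map_mul' := emb2_mul dS d1 d2
  map_zero' := emb2_zero dS d1 d2
  map_add' := emb2_add dS d1 d2

private lemma continuous_embS : Continuous (embS dS d1 d2) := by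
  apply continuous_matrix; intro x y
  simp only [embS, Matrix.of_apply]
  exact ((continuous_id.matrix_elem x.1 y.1).mul continuous_const).mul
    continuous_const

private lemma continuous_emb1 : Continuous (emb1 dS d1 d2) := by
  apply continuous_matrix; intro x y
  simp only [emb1, Matrix.of_apply]
  exact (continuous_id.matrix_elem (x.1, x.2.1) (y.1, y.2.1)).mul continuous_const

private lemma continuous_emb2 : Continuous (emb2 dS d1 d2) := by
  apply continuous_matrix; intro x y
  simp only [emb2, Matrix.of_apply]
  exact (continuous_id.matrix_elem (x.1, x.2.2) (y.1, y.2.2)).mul continuous_const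

end Aux

/-! ### Exponential lemmas -/

private lemma matrix_map_exp {m n : Type*} [Fintype m] [DecidableEq m] [Fintype n]
    [DecidableEq n] (f : Matrix m m ℂ →+* Matrix n n ℂ) (hf : Continuous f) (x : Matrix m m ℂ) :
    f (NormedSpace.exp x) = NormedSpace.exp (f x) := by
  letI : SeminormedRing (Matrix m m ℂ) := Matrix.linftyOpSemiNormedRing
  letI : NormedRing (Matrix m m ℂ) := Matrix.linftyOpNormedRing
  letI : NormedAlgebra ℂ (Matrix m m ℂ) := Matrix.linftyOpNormedAlgebra
  letI : SeminormedRing (Matrix n n ℂ) := Matrix.linftyOpSemiNormedRing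
  letI : NormedRing (Matrix n n ℂ) := Matrix.linftyOpNormedRing
  letI : NormedAlgebra ℂ (Matrix n n ℂ) := Matrix.linftyOpNormedAlgebra
  letI : NormedAlgebra ℚ (Matrix m m ℂ) := NormedAlgebra.restrictScalars ℚ ℂ _
  exact NormedSpace.map_exp f hf x

private lemma matrix_commute_exp {m : Type*} [Fintype m] [DecidableEq m]
    {A B : Matrix m m ℂ} (h : Commute A B) :
    Commute (NormedSpace.exp A) (NormedSpace.exp B) := by
  letI : SeminormedRing (Matrix m m ℂ) := Matrix.linftyOpSemiNormedRing
  letI : NormedRing (Matrix m m ℂ) := Matrix.linftyOpNormedRing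
  letI : NormedAlgebra ℂ (Matrix m m ℂ) := Matrix.linftyOpNormedAlgebra
  exact h.exp

private lemma commute_smul {m : Type*} [Fintype m] {A B : Matrix m m ℂ} (c d : ℂ)
    (h : Commute A B) : Commute (c • A) (d • B) := by
  unfold Commute SemiconjBy
  simp only [smul_mul_assoc, mul_smul_comm, h.eq, smul_smul, mul_comm c d]

section expEmb
variable (dS d1 d2 : ℕ)

private lemma exp_embS (h : Matrix (Fin dS) (Fin dS) ℂ) :
    NormedSpace.exp (embS dS d1 d2 h) = embS dS d1 d2 (NormedSpace.exp h) :=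
  (matrix_map_exp (embSHom dS d1 d2) (continuous_embS dS d1 d2) h).symm

private lemma exp_emb1 (g : Matrix (Fin dS × Fin d1) (Fin dS × Fin d1) ℂ) :
    NormedSpace.exp (emb1 dS d1 d2 g) = emb1 dS d1 d2 (NormedSpace.exp g) :=
  (matrix_map_exp (emb1Hom dS d1 d2) (continuous_emb1 dS d1 d2) g).symm

private lemma exp_emb2 (g : Matrix (Fin dS × Fin d2) (Fin dS × Fin d2) ℂ) :
    NormedSpace.exp (emb2 dS d1 d2 g) = emb2 dS d1 d2 (NormedSpace.exp g) :=
  (matrix_map_exp (emb2Hom dS d1 d2) (continuous_emb2 dS d1 d2) g).symm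

end expEmb

/-- Core of the paper's Lemma 5: when the interaction Hamiltonians commute
among themselves and with the system Hamiltonian, the reduced dynamics under
two simultaneous environments factorizes into the composition of the
(commuting) single-environment dynamical maps, conjugated by the free system
evolution. -/
theorem stmt_2 (dS d1 d2 : ℕ)
    (hS : Matrix (Fin dS) (Fin dS) ℂ) (hhS : hS.IsHermitian)
    (g1 : Matrix (Fin dS × Fin d1) (Fin dS × Fin d1) ℂ) (hg1 : g1.IsHermitian)
    (g2 : Matrix (Fin dS × Fin d2) (Fin dS × Fin d2) ℂ) (hg2 : g2.IsHermitian)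
    (hcommI : emb1 dS d1 d2 g1 * emb2 dS d1 d2 g2
      = emb2 dS d1 d2 g2 * emb1 dS d1 d2 g1)
    (hcommS1 : emb1 dS d1 d2 g1 * embS dS d1 d2 hS
      = embS dS d1 d2 hS * emb1 dS d1 d2 g1)
    (hcommS2 : emb2 dS d1 d2 g2 * embS dS d1 d2 hS
      = embS dS d1 d2 hS * emb2 dS d1 d2 g2)
    (ρ : Matrix (Fin dS) (Fin dS) ℂ)
    (ρ1 : Matrix (Fin d1) (Fin d1) ℂ) (ρ2 : Matrix (Fin d2) (Fin d2) ℂ) :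
    ∀ t : ℝ,
      (trE12 dS d1 d2
        (NormedSpace.exp ((-(Complex.I * (t : ℂ))) •
            (embS dS d1 d2 hS + emb1 dS d1 d2 g1 + emb2 dS d1 d2 g2)) *
          kron3 dS d1 d2 ρ ρ1 ρ2 *
          NormedSpace.exp ((Complex.I * (t : ℂ)) •
            (embS dS d1 d2 hS + emb1 dS d1 d2 g1 + emb2 dS d1 d2 g2)))
        = NormedSpace.exp ((-(Complex.I * (t : ℂ))) • hS) *
            envMap dS d2 g2 ρ2 t (envMap dS d1 g1 ρ1 t ρ) *
            NormedSpace.exp ((Complex.I * (t : ℂ)) • hS)) ∧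
      ∀ σ : Matrix (Fin dS) (Fin dS) ℂ,
        envMap dS d1 g1 ρ1 t (envMap dS d2 g2 ρ2 t σ)
          = envMap dS d2 g2 ρ2 t (envMap dS d1 g1 ρ1 t σ) := by
  intro t
  set A := embS dS d1 d2 hS with hA
  set B := emb1 dS d1 d2 g1 with hB
  set C := emb2 dS d1 d2 g2 with hC
  have cAB : Commute A B := hcommS1.symm
  have cAC : Commute A C := hcommS2.symm
  have cBC : Commute B C := hcommI
  -- factorization of the exponential
  have hfac : ∀ c : ℂ, NormedSpace.exp (c • (A + B + C))
      = NormedSpace.exp (c • A) * NormedSpace.exp (c • B) * NormedSpace.exp (c • C) := by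
    intro c
    have h1 : c • (A + B + C) = c • A + c • B + c • C := by
      rw [smul_add, smul_add]
    rw [h1, Matrix.exp_add_of_commute _ _
      ((commute_smul c c cAC).add_left (commute_smul c c cBC)),
      Matrix.exp_add_of_commute _ _ (commute_smul c c cAB)]
  -- commutation of exponential factors
  have ceAB : ∀ c c' : ℂ, Commute (NormedSpace.exp (c • A)) (NormedSpace.exp (c' • B)) :=
    fun c c' => matrix_commute_exp (commute_smul c c' cAB)
  have ceAC : ∀ c c' : ℂ, Commute (NormedSpace.exp (c • A)) (NormedSpace.exp (c' • C)) :=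
    fun c c' => matrix_commute_exp (commute_smul c c' cAC)
  have ceBC : ∀ c c' : ℂ, Commute (NormedSpace.exp (c • B)) (NormedSpace.exp (c' • C)) :=
    fun c c' => matrix_commute_exp (commute_smul c c' cBC)
  set s : ℂ := -(Complex.I * (t : ℂ)) with hs
  set s' : ℂ := Complex.I * (t : ℂ) with hs'
  -- embedded exponentials
  have eA : ∀ c : ℂ, NormedSpace.exp (c • A) = embS dS d1 d2 (NormedSpace.exp (c • hS)) := by
    intro c; rw [hA, ← embS_smul, exp_embS]
  have eB : ∀ c : ℂ, NormedSpace.exp (c • B) = emb1 dS d1 d2 (NormedSpace.exp (c • g1)) := by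
    intro c; rw [hB, ← emb1_smul, exp_emb1]
  have eC : ∀ c : ℂ, NormedSpace.exp (c • C) = emb2 dS d1 d2 (NormedSpace.exp (c • g2)) := by
    intro c; rw [hC, ← emb2_smul, exp_emb2]
  set US := NormedSpace.exp (s • hS)
  set US' := NormedSpace.exp (s' • hS)
  set X := NormedSpace.exp (s • g1)
  set X' := NormedSpace.exp (s' • g1)
  set Y := NormedSpace.exp (s • g2)
  set Y' := NormedSpace.exp (s' • g2)
  -- the commutes at the embedded level
  have c1 : emb1 dS d1 d2 X * emb2 dS d1 d2 Y = emb2 dS d1 d2 Y * emb1 dS d1 d2 X := by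
    rw [← eB, ← eC]; exact (ceBC s s).eq
  have c2 : emb1 dS d1 d2 X' * emb2 dS d1 d2 Y' = emb2 dS d1 d2 Y' * emb1 dS d1 d2 X' := by
    rw [← eB, ← eC]; exact (ceBC s' s').eq
  constructor
  · -- main reduced dynamics
    have hL : NormedSpace.exp (s • (A + B + C))
        = embS dS d1 d2 US * (emb2 dS d1 d2 Y * emb1 dS d1 d2 X) := by
      rw [hfac s, mul_assoc, (ceBC s s).eq, eA, eB, eC]
    have hR : NormedSpace.exp (s' • (A + B + C))
        = emb1 dS d1 d2 X' * (emb2 dS d1 d2 Y' * embS dS d1 d2 US') := by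
      rw [hfac s', (ceAB s' s').eq, mul_assoc, (ceAC s' s').eq, eA, eB, eC]
    rw [hL, hR]
    have hre : embS dS d1 d2 US * (emb2 dS d1 d2 Y * emb1 dS d1 d2 X) * kron3 dS d1 d2 ρ ρ1 ρ2 *
        (emb1 dS d1 d2 X' * (emb2 dS d1 d2 Y' * embS dS d1 d2 US'))
        = embS dS d1 d2 US *
          (emb2 dS d1 d2 Y * (emb1 dS d1 d2 X * kron3 dS d1 d2 ρ ρ1 ρ2 * emb1 dS d1 d2 X') *
            emb2 dS d1 d2 Y') * embS dS d1 d2 US' := by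
      simp only [mul_assoc]
    rw [hre, kron3_eq_midB, emb1_mul_midB, midB_mul_emb1, trE12_conj_embS, trE12_emb2_midB]
    rfl
  · -- commutation of the two dynamical maps
    intro σ
    have e1 : envMap dS d2 g2 ρ2 t (envMap dS d1 g1 ρ1 t σ)
        = trE12 dS d1 d2 (emb2 dS d1 d2 Y *
            (emb1 dS d1 d2 X * kron3 dS d1 d2 σ ρ1 ρ2 * emb1 dS d1 d2 X') * emb2 dS d1 d2 Y') := by
      rw [kron3_eq_midB, emb1_mul_midB, midB_mul_emb1, trE12_emb2_midB]
      rfl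
    have e2 : envMap dS d1 g1 ρ1 t (envMap dS d2 g2 ρ2 t σ)
        = trE12 dS d1 d2 (emb1 dS d1 d2 X *
            (emb2 dS d1 d2 Y * kron3 dS d1 d2 σ ρ1 ρ2 * emb2 dS d1 d2 Y') * emb1 dS d1 d2 X') := by
      rw [kron3_eq_midA, emb2_mul_midA, midA_mul_emb2, trE12_emb1_midA]
      rfl
    rw [e1, e2]
    refine congrArg (trE12 dS d1 d2) ?_
    calc emb1 dS d1 d2 X * (emb2 dS d1 d2 Y * kron3 dS d1 d2 σ ρ1 ρ2 * emb2 dS d1 d2 Y') *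
          emb1 dS d1 d2 X'
        = emb1 dS d1 d2 X * emb2 dS d1 d2 Y * kron3 dS d1 d2 σ ρ1 ρ2 *
          (emb2 dS d1 d2 Y' * emb1 dS d1 d2 X') := by simp only [mul_assoc]
      _ = emb2 dS d1 d2 Y * emb1 dS d1 d2 X * kron3 dS d1 d2 σ ρ1 ρ2 *
          (emb1 dS d1 d2 X' * emb2 dS d1 d2 Y') := by rw [c1, c2]
      _ = emb2 dS d1 d2 Y * (emb1 dS d1 d2 X * kron3 dS d1 d2 σ ρ1 ρ2 * emb1 dS d1 d2 X') *
          emb2 dS d1 d2 Y' := by simp only [mul_assoc]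
end

section
/- Let d_S, d_1, d_2 be positive integers, and let A, A' be d_S×d_S matrices, B a d_1×d_1 matrix, B' a d_2×d_2 matrix. On ℂ^{d_S}⊗ℂ^{d_1}⊗ℂ^{d_2} set X = A⊗B⊗1_{d_2} and Y = A'⊗1_{d_1}⊗B'. Let ρ be a d_S×d_S matrix and let ϱ_1, ϱ_2 be d_1×d_1 and d_2×d_2 matrices with Tr(B ϱ_1) = 0. Then Tr_{E_1E_2}[ X (Y (ρ⊗ϱ_1⊗ϱ_2) − (ρ⊗ϱ_1⊗ϱ_2) Y) − (Y (ρ⊗ϱ_1⊗ϱ_2) − (ρ⊗ϱ_1⊗ϱ_2) Y) X ] = 0, i.e. the partial trace over both environment factors of the double commutator [X,[Y, ρ⊗ϱ_1⊗ϱ_2]] vanishes. -/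
open Matrix

/-- Tensor product `M ⊗ N ⊗ K` on `ℂ^{dS} ⊗ ℂ^{d1} ⊗ ℂ^{d2}`. -/
noncomputable def tens3 (dS d1 d2 : ℕ)
    (M : Matrix (Fin dS) (Fin dS) ℂ) (N : Matrix (Fin d1) (Fin d1) ℂ)
    (K : Matrix (Fin d2) (Fin d2) ℂ) :
    Matrix (Fin dS × Fin d1 × Fin d2) (Fin dS × Fin d1 × Fin d2) ℂ :=
  Matrix.of fun x y => M x.1 y.1 * N x.2.1 y.2.1 * K x.2.2 y.2.2

lemma tens3_mul (dS d1 d2 : ℕ)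
    (M M' : Matrix (Fin dS) (Fin dS) ℂ) (N N' : Matrix (Fin d1) (Fin d1) ℂ)
    (K K' : Matrix (Fin d2) (Fin d2) ℂ) :
    tens3 dS d1 d2 M N K * tens3 dS d1 d2 M' N' K' =
      tens3 dS d1 d2 (M * M') (N * N') (K * K') := by
  ext x y
  simp only [tens3, Matrix.mul_apply, Matrix.of_apply, Fintype.sum_prod_type,
    Finset.sum_mul, Finset.mul_sum]
  conv_rhs => rw [Finset.sum_comm]
  conv_lhs => rw [Finset.sum_comm]
  refine Finset.sum_congr rfl fun j _ => ?_
  rw [Finset.sum_comm]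
  exact Finset.sum_congr rfl fun i _ => Finset.sum_congr rfl fun k _ => by ring

lemma trE12_tens3 (dS d1 d2 : ℕ)
    (M : Matrix (Fin dS) (Fin dS) ℂ) (N : Matrix (Fin d1) (Fin d1) ℂ)
    (K : Matrix (Fin d2) (Fin d2) ℂ) :
    trE12 dS d1 d2 (tens3 dS d1 d2 M N K) = (N.trace * K.trace) • M := by
  ext a b
  simp only [trE12, tens3, Matrix.of_apply, Matrix.smul_apply, smul_eq_mul,
    Matrix.trace, Matrix.diag, Finset.sum_mul, Finset.mul_sum]
  conv_rhs => rw [Finset.sum_comm]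
  refine Finset.sum_congr rfl fun k _ => Finset.sum_congr rfl fun l _ => by ring

/-- Algebraic core of the paper's Lemma 4: with `X = A ⊗ B ⊗ 1`,
`Y = A' ⊗ 1 ⊗ B'` and a product state `ρ ⊗ ϱ₁ ⊗ ϱ₂` whose single-bath
correlation function `Tr(B ϱ₁)` vanishes, the partial trace over both
environments of the double commutator `[X, [Y, ρ ⊗ ϱ₁ ⊗ ϱ₂]]` vanishes. -/
theorem stmt_3 (dS d1 d2 : ℕ)
    (A A' : Matrix (Fin dS) (Fin dS) ℂ)
    (B : Matrix (Fin d1) (Fin d1) ℂ) (B' : Matrix (Fin d2) (Fin d2) ℂ)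
    (ρ : Matrix (Fin dS) (Fin dS) ℂ)
    (ϱ1 : Matrix (Fin d1) (Fin d1) ℂ) (ϱ2 : Matrix (Fin d2) (Fin d2) ℂ)
    (htr : (B * ϱ1).trace = 0) :
    trE12 dS d1 d2
      (tens3 dS d1 d2 A B 1 *
          (tens3 dS d1 d2 A' 1 B' * tens3 dS d1 d2 ρ ϱ1 ϱ2 -
            tens3 dS d1 d2 ρ ϱ1 ϱ2 * tens3 dS d1 d2 A' 1 B') -
        (tens3 dS d1 d2 A' 1 B' * tens3 dS d1 d2 ρ ϱ1 ϱ2 -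
            tens3 dS d1 d2 ρ ϱ1 ϱ2 * tens3 dS d1 d2 A' 1 B') *
          tens3 dS d1 d2 A B 1) = 0 := by
  have htr' : (ϱ1 * B).trace = 0 := by rwa [Matrix.trace_mul_comm]
  have hlin : ∀ (P Q : Matrix (Fin dS × Fin d1 × Fin d2) (Fin dS × Fin d1 × Fin d2) ℂ),
      trE12 dS d1 d2 (P - Q) = trE12 dS d1 d2 P - trE12 dS d1 d2 Q := by
    intro P Q
    ext a b
    simp [trE12, Finset.sum_sub_distrib]
  simp only [mul_sub, sub_mul, tens3_mul, hlin, trE12_tens3, Matrix.mul_one,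
    Matrix.one_mul, htr, htr', zero_mul, zero_smul, sub_zero, sub_self]
end

section
/- Let H_S be a Hermitian d_S×d_S matrix, H_E a Hermitian d_E×d_E matrix, H_I a Hermitian matrix on ℂ^{d_S}⊗ℂ^{d_E} satisfying (H_S⊗1) H_I = H_I (H_S⊗1), and let ρ_E be a d_E×d_E matrix. Define H_T = H_S⊗1 + 1⊗H_E + H_I and, for t ≥ 0, the map Λ_t(ρ) := Tr_E[ e^{−iH_T t} (ρ⊗ρ_E) e^{iH_T t} ] on d_S×d_S matrices. Then Λ_t is H_S-covariant: for all s, t and all ρ, Λ_t( e^{−iH_S s} ρ e^{iH_S s} ) = e^{−iH_S s} Λ_t(ρ) e^{iH_S s}. -/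
/-!
Since `H_S ⊗ 1` commutes with `1 ⊗ H_E` and, by hypothesis, with `H_I`, it commutes with `H_T`;
hence `e^{-i H_S s} ⊗ 1 = e^{-i s (H_S ⊗ 1)}` commutes with `e^{∓ i H_T t}`. Writing
`(e^{-i H_S s} ρ e^{i H_S s}) ⊗ ρ_E` as `(e^{-i H_S s} ⊗ 1)(ρ ⊗ ρ_E)(e^{i H_S s} ⊗ 1)`, the two
outer factors can be moved past the total evolution, and the partial trace over the environment
pulls out operators of the form `X ⊗ 1` on either side.
-/

open Matrix

open scoped Kronecker

theorem kron2_eq_kronecker (d dE : ℕ) (A : Matrix (Fin d) (Fin d) ℂ)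
    (B : Matrix (Fin dE) (Fin dE) ℂ) : kron2 d dE A B = A ⊗ₖ B := rfl

theorem exp_kronecker_one {m n : Type*} [Fintype m] [DecidableEq m] [Fintype n] [DecidableEq n]
    (A : Matrix m m ℂ) :
    NormedSpace.exp (A ⊗ₖ (1 : Matrix n n ℂ)) = NormedSpace.exp A ⊗ₖ 1 := by
  rw [kronecker_one, kronecker_one, exp_blockDiagonal]
  congr 1
  ext1 k
  open scoped Matrix.Norms.Operator in exact Pi.coe_exp _ k

theorem trEnv_kronecker_one_mul (d dE : ℕ) (A : Matrix (Fin d) (Fin d) ℂ)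
    (M : Matrix (Fin d × Fin dE) (Fin d × Fin dE) ℂ) :
    trEnv d dE (A ⊗ₖ 1 * M) = A * trEnv d dE M := by
  ext a b
  simp only [trEnv, kroneckerMap_apply, mul_apply, of_apply, Fintype.sum_prod_type, one_apply,
    mul_ite, mul_one, mul_zero, ite_mul, zero_mul, Finset.sum_ite_eq, Finset.mem_univ, if_true,
    Finset.mul_sum]
  exact Finset.sum_comm

theorem trEnv_mul_kronecker_one (d dE : ℕ) (B : Matrix (Fin d) (Fin d) ℂ)
    (M : Matrix (Fin d × Fin dE) (Fin d × Fin dE) ℂ) :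
    trEnv d dE (M * B ⊗ₖ 1) = trEnv d dE M * B := by
  ext a b
  simp only [trEnv, kroneckerMap_apply, mul_apply, of_apply, Fintype.sum_prod_type, one_apply,
    mul_ite, mul_one, mul_zero, Finset.sum_ite_eq', Finset.mem_univ, if_true, Finset.sum_mul]
  exact Finset.sum_comm

theorem commute_kronecker_one_one_kronecker {m n R : Type*} [Fintype m] [DecidableEq m]
    [Fintype n] [DecidableEq n] [CommSemiring R] (A : Matrix m m R) (B : Matrix n n R) :
    Commute (A ⊗ₖ (1 : Matrix n n R)) ((1 : Matrix m m R) ⊗ₖ B) := by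
  simp only [Commute, SemiconjBy, ← mul_kronecker_mul, mul_one, one_mul]

theorem Commute.exp_smul_kronecker_one {m n : Type*} [Fintype m] [DecidableEq m] [Fintype n]
    [DecidableEq n] {H : Matrix m m ℂ} {K : Matrix (m × n) (m × n) ℂ}
    (h : Commute (H ⊗ₖ (1 : Matrix n n ℂ)) K) (c c' : ℂ) :
    Commute (NormedSpace.exp (c • H) ⊗ₖ (1 : Matrix n n ℂ)) (NormedSpace.exp (c' • K)) := by
  rw [← exp_kronecker_one, smul_kronecker]
  exact ((h.smul_left c).smul_right c').exp

theorem mul_mul_kronecker {m n R : Type*} [Fintype m] [DecidableEq m] [Fintype n]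
    [DecidableEq n] [CommSemiring R] (A ρ B : Matrix m m R) (σ : Matrix n n R) :
    (A * ρ * B) ⊗ₖ σ = (A ⊗ₖ 1) * (ρ ⊗ₖ σ) * (B ⊗ₖ 1) := by
  rw [← mul_kronecker_mul, ← mul_kronecker_mul, one_mul, mul_one]

theorem trEnv_conj_kronecker (d dE : ℕ) {A B ρ : Matrix (Fin d) (Fin d) ℂ}
    {σ : Matrix (Fin dE) (Fin dE) ℂ} {W W' : Matrix (Fin d × Fin dE) (Fin d × Fin dE) ℂ}
    (hA : Commute (A ⊗ₖ 1) W) (hB : Commute (B ⊗ₖ 1) W') :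
    trEnv d dE (W * (A * ρ * B) ⊗ₖ σ * W') = A * trEnv d dE (W * ρ ⊗ₖ σ * W') * B := by
  rw [mul_mul_kronecker, ← trEnv_kronecker_one_mul, ← trEnv_mul_kronecker_one]
  congr 1
  calc W * (A ⊗ₖ 1 * ρ ⊗ₖ σ * B ⊗ₖ 1) * W'
        = W * A ⊗ₖ 1 * ρ ⊗ₖ σ * (B ⊗ₖ 1 * W') := by simp only [mul_assoc]
    _ = A ⊗ₖ 1 * W * ρ ⊗ₖ σ * (W' * B ⊗ₖ 1) := by rw [hA.eq, hB.eq]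
    _ = A ⊗ₖ 1 * (W * ρ ⊗ₖ σ * W') * B ⊗ₖ 1 := by simp only [mul_assoc]

theorem stmt_4_general (dS dE : ℕ)
    (HS : Matrix (Fin dS) (Fin dS) ℂ)
    (HE : Matrix (Fin dE) (Fin dE) ℂ)
    (HI : Matrix (Fin dS × Fin dE) (Fin dS × Fin dE) ℂ)
    (hcomm : kron2 dS dE HS 1 * HI = HI * kron2 dS dE HS 1)
    (ρE : Matrix (Fin dE) (Fin dE) ℂ) :
    ∀ (s t : ℝ) (ρ : Matrix (Fin dS) (Fin dS) ℂ),
      trEnv dS dE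
        (NormedSpace.exp ((-(Complex.I * (t : ℂ))) •
            (kron2 dS dE HS 1 + kron2 dS dE 1 HE + HI)) *
          kron2 dS dE
            (NormedSpace.exp ((-(Complex.I * (s : ℂ))) • HS) * ρ *
              NormedSpace.exp ((Complex.I * (s : ℂ)) • HS)) ρE *
          NormedSpace.exp ((Complex.I * (t : ℂ)) •
            (kron2 dS dE HS 1 + kron2 dS dE 1 HE + HI)))
      = NormedSpace.exp ((-(Complex.I * (s : ℂ))) • HS) *
          trEnv dS dE
            (NormedSpace.exp ((-(Complex.I * (t : ℂ))) •
                (kron2 dS dE HS 1 + kron2 dS dE 1 HE + HI)) *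
              kron2 dS dE ρ ρE *
              NormedSpace.exp ((Complex.I * (t : ℂ)) •
                (kron2 dS dE HS 1 + kron2 dS dE 1 HE + HI))) *
          NormedSpace.exp ((Complex.I * (s : ℂ)) • HS) := by
  intro s t ρ
  simp only [kron2_eq_kronecker]
  have hHT : Commute (HS ⊗ₖ 1) (HS ⊗ₖ 1 + 1 ⊗ₖ HE + HI) :=
    ((Commute.refl _).add_right (commute_kronecker_one_one_kronecker HS HE)).add_right hcomm
  exact trEnv_conj_kronecker dS dE (hHT.exp_smul_kronecker_one _ _)
    (hHT.exp_smul_kronecker_one _ _)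

/-- Covariance property underlying the paper's Lemma 3: when the system
Hamiltonian commutes with the interaction Hamiltonian, the microscopically
derived dynamical map `Λ_t(ρ) = Tr_E[e^{-iH_T t}(ρ ⊗ ρ_E)e^{iH_T t}]`
commutes with the free system unitary evolution. -/
theorem stmt_4 (dS dE : ℕ)
    (HS : Matrix (Fin dS) (Fin dS) ℂ) (hHS : HS.IsHermitian)
    (HE : Matrix (Fin dE) (Fin dE) ℂ) (hHE : HE.IsHermitian)
    (HI : Matrix (Fin dS × Fin dE) (Fin dS × Fin dE) ℂ) (hHI : HI.IsHermitian)
    (hcomm : kron2 dS dE HS 1 * HI = HI * kron2 dS dE HS 1)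
    (ρE : Matrix (Fin dE) (Fin dE) ℂ) :
    ∀ (s t : ℝ) (ρ : Matrix (Fin dS) (Fin dS) ℂ),
      trEnv dS dE
        (NormedSpace.exp ((-(Complex.I * (t : ℂ))) •
            (kron2 dS dE HS 1 + kron2 dS dE 1 HE + HI)) *
          kron2 dS dE
            (NormedSpace.exp ((-(Complex.I * (s : ℂ))) • HS) * ρ *
              NormedSpace.exp ((Complex.I * (s : ℂ)) • HS)) ρE *
          NormedSpace.exp ((Complex.I * (t : ℂ)) •
            (kron2 dS dE HS 1 + kron2 dS dE 1 HE + HI)))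
      = NormedSpace.exp ((-(Complex.I * (s : ℂ))) • HS) *
          trEnv dS dE
            (NormedSpace.exp ((-(Complex.I * (t : ℂ))) •
                (kron2 dS dE HS 1 + kron2 dS dE 1 HE + HI)) *
              kron2 dS dE ρ ρE *
              NormedSpace.exp ((Complex.I * (t : ℂ)) •
                (kron2 dS dE HS 1 + kron2 dS dE 1 HE + HI))) *
          NormedSpace.exp ((Complex.I * (s : ℂ)) • HS) :=
  stmt_4_general dS dE HS HE HI hcomm ρE
end

section
/- Let σ_x = [[0,1],[1,0]], σ_z = [[1,0],[0,−1]], σ_+ = [[0,1],[0,0]], σ_− = [[0,0],[1,0]]. Consider the solution ρ : ℝ → M_2(ℂ) of the master equation dρ/dt = sin(2t)(σ_x ρ σ_x − ρ) + (σ_− ρ σ_+ − ½(σ_+σ_− ρ + ρ σ_+σ_−)) with initial condition ρ(0) = ½·I (the maximally mixed state). Then ρ(π) = ½(I − κ σ_z) with κ = e^{1−π} ∫_0^π e^{s − cos(2s)} ds, and κ > 1; consequently ρ(π) is not positive semidefinite, so the dynamics generated by the sum of these two generators is not physical. -/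
/-!
The master equation decouples entrywise. The trace is conserved, the coherences
`ρ₀₁ ± ρ₁₀` satisfy homogeneous linear equations with rates `1/2` and `1/2 + 2 sin 2t` and so
stay `0`, and the population difference `z = ρ₁₁ - ρ₀₀` satisfies
`z' = -(1 + 2 sin 2t) z + 1`, `z 0 = 0`. The integrating factor `e^{t - cos 2t}` gives
`z π = e^{1-π} ∫₀^π e^{s - cos 2s} ds = κ`. Finally `κ > 1`: the integrand is at least `e^{s-1}`
everywhere and at least `e^s` on `[π/4, 3π/4]`, where `cos 2s ≤ 0`.
-/

open Matrix
open scoped ComplexOrder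

attribute [local instance] Matrix.normedAddCommGroup Matrix.normedSpace

noncomputable def sigmaX : Matrix (Fin 2) (Fin 2) ℂ := !![0, 1; 1, 0]
noncomputable def sigmaZ : Matrix (Fin 2) (Fin 2) ℂ := !![1, 0; 0, -1]
noncomputable def sigmaP : Matrix (Fin 2) (Fin 2) ℂ := !![0, 1; 0, 0]
noncomputable def sigmaM : Matrix (Fin 2) (Fin 2) ℂ := !![0, 0; 1, 0]

noncomputable def kappa13 : ℝ :=
  Real.exp (1 - Real.pi) * ∫ s in (0:ℝ)..Real.pi, Real.exp (s - Real.cos (2 * s))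

open Real intervalIntegral

theorem exp_smul_sub_eq_integral_of_linear_ode {E : Type*} [NormedAddCommGroup E]
    [NormedSpace ℝ E] [CompleteSpace E] {φ φ' : ℝ → ℝ} {f g : ℝ → E}
    (hφ : ∀ t, HasDerivAt φ (φ' t) t) (hf : ∀ t, HasDerivAt f (-φ' t • f t + g t) t)
    (hg : Continuous g) (a b : ℝ) :
    exp (φ b) • f b - exp (φ a) • f a = ∫ s in a..b, exp (φ s) • g s := by
  have hφc : Continuous φ := continuous_iff_continuousAt.2 fun t => (hφ t).continuousAt
  refine (integral_eq_sub_of_hasDerivAt (f := fun t => exp (φ t) • f t) (fun t _ => ?_)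
    (((continuous_exp.comp hφc).smul hg).intervalIntegrable a b)).symm
  refine ((hφ t).exp.smul (hf t)).congr_deriv ?_
  change _ = exp (φ t) • g t
  module

theorem eq_zero_of_linear_ode {E : Type*} [NormedAddCommGroup E]
    [NormedSpace ℝ E] [CompleteSpace E] {φ φ' : ℝ → ℝ} {f : ℝ → E}
    (hφ : ∀ t, HasDerivAt φ (φ' t) t) (hf : ∀ t, HasDerivAt f (-φ' t • f t) t)
    {a : ℝ} (ha : f a = 0) (b : ℝ) : f b = 0 := by
  have h := exp_smul_sub_eq_integral_of_linear_ode (g := fun _ => (0 : E)) hφ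
    (by simpa only [add_zero] using hf) continuous_const a b
  simpa [ha, (exp_pos _).ne'] using h

theorem hasDerivAt_cos_two_mul (t : ℝ) :
    HasDerivAt (fun t => cos (2 * t)) (-(2 * sin (2 * t))) t := by
  simpa [mul_comm] using ((hasDerivAt_id t).const_mul 2).cos

theorem HasDerivAt.matrix_apply {m n : Type*} [Fintype m] [Fintype n]
    {ρ : ℝ → Matrix m n ℂ} {ρ' : Matrix m n ℂ} {t : ℝ} (h : HasDerivAt ρ ρ' t) (i : m) (j : n) :
    HasDerivAt (fun t => ρ t i j) (ρ' i j) t :=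
  hasDerivAt_pi.1 (hasDerivAt_pi.1 h i) j

noncomputable def qubitGenerator (γ : ℂ) (M : Matrix (Fin 2) (Fin 2) ℂ) :
    Matrix (Fin 2) (Fin 2) ℂ :=
  γ • (sigmaX * M * sigmaX - M) +
    (sigmaM * M * sigmaP - (2:ℂ)⁻¹ • (sigmaP * sigmaM * M + M * (sigmaP * sigmaM)))

theorem qubitGenerator_eq (γ : ℂ) (M : Matrix (Fin 2) (Fin 2) ℂ) :
    qubitGenerator γ M =
      !![γ * (M 1 1 - M 0 0) - M 0 0, γ * (M 1 0 - M 0 1) - M 0 1 / 2;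
         γ * (M 0 1 - M 1 0) - M 1 0 / 2, γ * (M 0 0 - M 1 1) + M 0 0] := by
  ext i j
  fin_cases i <;> fin_cases j <;>
    simp [qubitGenerator, sigmaX, sigmaP, sigmaM, Matrix.mul_apply, Matrix.vecMul, dotProduct,
      Fin.sum_univ_two] <;> ring

section MasterEquation

variable {ρ : ℝ → Matrix (Fin 2) (Fin 2) ℂ}

theorem hasDerivAt_entries
    (hode : ∀ t, HasDerivAt ρ (qubitGenerator (sin (2 * t)) (ρ t)) t) (t : ℝ) :
    HasDerivAt (fun t => ρ t 0 0) (sin (2 * t) * (ρ t 1 1 - ρ t 0 0) - ρ t 0 0) t ∧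
    HasDerivAt (fun t => ρ t 0 1) (sin (2 * t) * (ρ t 1 0 - ρ t 0 1) - ρ t 0 1 / 2) t ∧
    HasDerivAt (fun t => ρ t 1 0) (sin (2 * t) * (ρ t 0 1 - ρ t 1 0) - ρ t 1 0 / 2) t ∧
    HasDerivAt (fun t => ρ t 1 1) (sin (2 * t) * (ρ t 0 0 - ρ t 1 1) + ρ t 0 0) t := by
  have h := hode t
  rw [qubitGenerator_eq] at h
  exact ⟨h.matrix_apply 0 0, h.matrix_apply 0 1, h.matrix_apply 1 0, h.matrix_apply 1 1⟩

theorem trace_eq_of_hasDerivAt_qubitGenerator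
    (hode : ∀ t, HasDerivAt ρ (qubitGenerator (sin (2 * t)) (ρ t)) t) (t : ℝ) :
    ρ t 0 0 + ρ t 1 1 = ρ 0 0 0 + ρ 0 1 1 := by
  have hderiv : ∀ t, HasDerivAt (fun t => ρ t 0 0 + ρ t 1 1) 0 t := fun t => by
    obtain ⟨h00, -, -, h11⟩ := hasDerivAt_entries hode t
    exact (h00.add h11).congr_deriv (by ring)
  exact is_const_of_deriv_eq_zero (fun t => (hderiv t).differentiableAt)
    (fun t => (hderiv t).deriv) t 0

theorem offDiag_eq_zero_of_hasDerivAt_qubitGenerator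
    (hode : ∀ t, HasDerivAt ρ (qubitGenerator (sin (2 * t)) (ρ t)) t)
    (h01 : ρ 0 0 1 = 0) (h10 : ρ 0 1 0 = 0) (t : ℝ) : ρ t 0 1 = 0 ∧ ρ t 1 0 = 0 := by
  have hsum : ρ t 0 1 + ρ t 1 0 = 0 := by
    refine eq_zero_of_linear_ode (φ := fun t => t / 2) (φ' := fun _ => 1 / 2)
      (f := fun t => ρ t 0 1 + ρ t 1 0) (fun t => (hasDerivAt_id t).div_const 2)
      (fun t => ?_) (a := 0) (by simp [h01, h10]) t
    obtain ⟨-, h01', h10', -⟩ := hasDerivAt_entries hode t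
    refine (h01'.add h10').congr_deriv ?_
    simp only [Complex.real_smul]
    push_cast
    ring
  have hdiff : ρ t 0 1 - ρ t 1 0 = 0 := by
    refine eq_zero_of_linear_ode (φ := fun t => t / 2 - cos (2 * t))
      (φ' := fun t => 1 / 2 + 2 * sin (2 * t)) (f := fun t => ρ t 0 1 - ρ t 1 0)
      (fun t => ?_) (fun t => ?_) (a := 0) (by simp [h01, h10]) t
    · exact ((hasDerivAt_id t).div_const 2).sub (hasDerivAt_cos_two_mul t) |>.congr_deriv (by ring)
    obtain ⟨-, h01', h10', -⟩ := hasDerivAt_entries hode t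
    refine (h01'.sub h10').congr_deriv ?_
    simp only [Complex.real_smul]
    push_cast
    ring
  exact ⟨by linear_combination (hsum + hdiff) / 2, by linear_combination (hsum - hdiff) / 2⟩

theorem sub_diag_eq_of_hasDerivAt_qubitGenerator
    (hode : ∀ t, HasDerivAt ρ (qubitGenerator (sin (2 * t)) (ρ t)) t)
    (h00 : ρ 0 0 0 = 2⁻¹) (h11 : ρ 0 1 1 = 2⁻¹) (t : ℝ) :
    ρ t 1 1 - ρ t 0 0 =
      (exp (cos (2 * t) - t) * ∫ s in (0:ℝ)..t, exp (s - cos (2 * s)) : ℝ) := by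
  have htr := trace_eq_of_hasDerivAt_qubitGenerator hode
  have h := exp_smul_sub_eq_integral_of_linear_ode (φ := fun t => t - cos (2 * t))
    (φ' := fun t => 1 + 2 * sin (2 * t)) (f := fun t => ρ t 1 1 - ρ t 0 0) (g := fun _ => 1)
    (fun t => ((hasDerivAt_id t).sub (hasDerivAt_cos_two_mul t)).congr_deriv (by ring))
    (fun t => ?_) continuous_const 0 t
  · simp only [h00, h11, sub_self, smul_zero, sub_zero, intervalIntegral.integral_smul_const] at h
    rw [Complex.real_smul, Complex.real_smul, mul_one] at h
    have hexp : (exp (cos (2 * t) - t) : ℂ) * exp (t - cos (2 * t)) = 1 := by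
      rw [← Complex.ofReal_mul, ← exp_add]
      simp
    rw [Complex.ofReal_mul]
    linear_combination (exp (cos (2 * t) - t) : ℂ) * h - (ρ t 1 1 - ρ t 0 0) * hexp
  obtain ⟨h00', -, -, h11'⟩ := hasDerivAt_entries hode t
  refine (h11'.sub h00').congr_deriv ?_
  simp only [Complex.real_smul]
  push_cast
  linear_combination htr t + h00 + h11

end MasterEquation

theorem exp_neg_one_add_exp_neg_pi_div_two_lt_one : exp (-1) + exp (-(π / 2)) < 1 := by
  have he : exp (-1) < 1 / 2 := by
    rw [exp_neg, inv_lt_comm₀ (exp_pos 1) (by norm_num)]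
    linarith [exp_one_gt_d9]
  have hπ : exp (-(π / 2)) < exp (-1) := exp_lt_exp.2 (by linarith [pi_gt_three])
  linarith

theorem exp_pi_sub_one_lt_integral :
    exp (π - 1) < ∫ s in (0:ℝ)..π, exp (s - cos (2 * s)) := by
  have hπ := pi_gt_three
  have hf : ∀ a b : ℝ,
      IntervalIntegrable (fun s => exp (s - cos (2 * s))) MeasureTheory.volume a b :=
    fun a b => (by fun_prop : Continuous fun s : ℝ => exp (s - cos (2 * s))).intervalIntegrable a b
  have h1 : 0 ≤ ∫ s in (0:ℝ)..π / 4, exp (s - cos (2 * s)) :=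
    integral_nonneg (by positivity) fun _ _ => (exp_pos _).le
  have h2 : exp (3 * π / 4) - exp (π / 4) ≤ ∫ s in π / 4..3 * π / 4, exp (s - cos (2 * s)) := by
    rw [← integral_exp]
    refine integral_mono_on (by linarith) (continuous_exp.intervalIntegrable _ _) (hf _ _)
      fun s hs => exp_le_exp.2 ?_
    have : cos (2 * s) ≤ 0 :=
      cos_nonpos_of_pi_div_two_le_of_le (by linarith [hs.1]) (by linarith [hs.2])
    linarith
  have h3 : exp (π - 1) - exp (3 * π / 4 - 1) ≤ ∫ s in 3 * π / 4..π, exp (s - cos (2 * s)) := by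
    rw [← integral_exp, ← integral_comp_sub_right]
    exact integral_mono_on (by linarith)
      ((by fun_prop : Continuous fun s : ℝ => exp (s - 1)).intervalIntegrable _ _) (hf _ _)
      fun s _ => exp_le_exp.2 (by linarith [cos_le_one (2 * s)])
  have h4 : exp (3 * π / 4 - 1) + exp (π / 4) < exp (3 * π / 4) :=
    calc exp (3 * π / 4 - 1) + exp (π / 4)
        = exp (3 * π / 4) * (exp (-1) + exp (-(π / 2))) := by
          rw [mul_add, ← exp_add, ← exp_add]; ring_nf
      _ < exp (3 * π / 4) :=
          mul_lt_of_lt_one_right (exp_pos _) exp_neg_one_add_exp_neg_pi_div_two_lt_one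
  rw [← integral_add_adjacent_intervals (hf 0 (3 * π / 4)) (hf _ _),
    ← integral_add_adjacent_intervals (hf 0 (π / 4)) (hf _ _)]
  linarith

theorem one_lt_kappa13 : 1 < kappa13 :=
  calc (1 : ℝ) = exp (1 - π) * exp (π - 1) := by rw [← exp_add]; simp
    _ < kappa13 := mul_lt_mul_of_pos_left exp_pi_sub_one_lt_integral (exp_pos _)

theorem not_posSemidef_half_one_sub_smul_sigmaZ {κ : ℝ} (hκ : 1 < κ) :
    ¬ ((2:ℂ)⁻¹ • (1 - (κ : ℂ) • sigmaZ)).PosSemidef := by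
  intro h
  have h00 : (0 : ℂ) ≤ ((2⁻¹ * (1 - κ) : ℝ) : ℂ) := by
    simpa [sigmaZ] using h.diag_nonneg (i := 0)
  linarith [Complex.zero_le_real.1 h00]

/-- First counterexample of the paper: the solution of the master equation
obtained by adding the dephasing generator with rate `sin(2t)` and the
amplitude-damping generator with rate `1`, started from the maximally mixed
state, reaches at `t = π` the matrix `½(1 - κ σ_z)` with `κ > 1`, which is not
positive semidefinite — so the summed dynamics is unphysical. -/
theorem stmt_13 (ρ : ℝ → Matrix (Fin 2) (Fin 2) ℂ)
    (hρ0 : ρ 0 = (2:ℂ)⁻¹ • (1 : Matrix (Fin 2) (Fin 2) ℂ))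
    (hode : ∀ t : ℝ, HasDerivAt ρ
      (((Real.sin (2 * t) : ℂ)) • (sigmaX * ρ t * sigmaX - ρ t) +
        (sigmaM * ρ t * sigmaP -
          (2:ℂ)⁻¹ • (sigmaP * sigmaM * ρ t + ρ t * (sigmaP * sigmaM)))) t) :
    ρ Real.pi = (2:ℂ)⁻¹ •
        ((1 : Matrix (Fin 2) (Fin 2) ℂ) - (kappa13 : ℂ) • sigmaZ) ∧
    1 < kappa13 ∧
    ¬ (ρ Real.pi).PosSemidef := by
  have hgen : ∀ t, HasDerivAt ρ (qubitGenerator (sin (2 * t)) (ρ t)) t := hode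
  have h00 : ρ 0 0 0 = 2⁻¹ := by simp [hρ0]
  have h11 : ρ 0 1 1 = 2⁻¹ := by simp [hρ0]
  have h01 : ρ 0 0 1 = 0 := by simp [hρ0]
  have h10 : ρ 0 1 0 = 0 := by simp [hρ0]
  have htr := trace_eq_of_hasDerivAt_qubitGenerator hgen π
  rw [h00, h11] at htr
  have hdiag : ρ π 1 1 - ρ π 0 0 = kappa13 := by
    rw [sub_diag_eq_of_hasDerivAt_qubitGenerator hgen h00 h11 π, cos_two_pi, kappa13]
  obtain ⟨h01π, h10π⟩ := offDiag_eq_zero_of_hasDerivAt_qubitGenerator hgen h01 h10 π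
  have hρπ : ρ π = (2:ℂ)⁻¹ • (1 - (kappa13 : ℂ) • sigmaZ) := by
    ext i j
    fin_cases i <;> fin_cases j <;> simp [sigmaZ, h01π, h10π]
    · linear_combination (htr - hdiag) / 2
    · linear_combination (htr + hdiag) / 2
  exact ⟨hρπ, one_lt_kappa13, hρπ ▸ not_posSemidef_half_one_sub_smul_sigmaZ one_lt_kappa13⟩
end

section
/- Let σ_x, σ_y, σ_z be the Pauli matrices and define for t ≥ 0 the linear map Λ_t on M_2(ℂ) by Λ_t(I) = I, Λ_t(σ_x) = e^{−t} cosh(t) σ_x, Λ_t(σ_y) = e^{−t} cosh(t) σ_y, Λ_t(σ_z) = e^{−2t} σ_z (extended by complex linearity). Then: (i) Λ_t solves dΛ_t/dt = L_t ∘ Λ_t with Λ_0 = id, where L_t(ρ) = ½(σ_x ρ σ_x − ρ) + ½(σ_y ρ σ_y − ρ) − ½ tanh(t)(σ_z ρ σ_z − ρ); (ii) for every t ≥ 0 the map Λ_t is completely positive (its Choi matrix is positive semidefinite) and trace preserving; and (iii) for every t > 0, ∫_0^t (−½ tanh(τ)) dτ = −½ log(cosh t) < 0, so the z-dissipation rate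 has strictly negative integral at all positive times. -/
open Matrix Kronecker
open scoped ComplexOrder

attribute [local instance] Matrix.normedAddCommGroup Matrix.normedSpace

noncomputable def sigmaY : Matrix (Fin 2) (Fin 2) ℂ :=
  !![0, -Complex.I; Complex.I, 0]
/-- The Choi matrix of a linear map on `2 × 2` complex matrices. -/
noncomputable def choiMatrix2
    (Φ : Matrix (Fin 2) (Fin 2) ℂ →ₗ[ℂ] Matrix (Fin 2) (Fin 2) ℂ) :
    Matrix (Fin 2 × Fin 2) (Fin 2 × Fin 2) ℂ :=
  ∑ k : Fin 2, ∑ l : Fin 2,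
    (Φ (Matrix.single k l 1)) ⊗ₖ (Matrix.single k l (1 : ℂ))

/-!
In the Pauli basis `1, σx, σy, σz` both `Λ_t` and the generator `L_t` are diagonal, because
every Pauli matrix conjugates each Pauli matrix to plus or minus itself. The eigenvalues of
`Λ_t` are `1, p, p, 2p - 1` with `p = e^{-t} cosh t = (1 + e^{-2t}) / 2`, those of `L_t` are
`0, tanh t - 1, tanh t - 1, -2`, and each eigenvalue of `Λ_t` solves the scalar equation
driven by the corresponding eigenvalue of `L_t`.

Comparing eigenvalues also shows `Λ_t = p • id + ((1 - p) / 2) • (Ad σx + Ad σy)`, a random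
unitary channel. Its weights are nonnegative exactly when `p ≤ 1`, i.e. `t ≥ 0`, and then its
Choi matrix is a nonnegative combination of the rank-one matrices `vec U (vec U)ᴴ`.
Finally, `log ∘ cosh` is a primitive of `tanh`, and `cosh t > 1` for `t ≠ 0`.
-/

def conjMap {n : Type*} [Fintype n] (U : Matrix n n ℂ) :
    Matrix n n ℂ →ₗ[ℂ] Matrix n n ℂ :=
  LinearMap.mulRight ℂ Uᴴ ∘ₗ LinearMap.mulLeft ℂ U

lemma conjMap_apply {n : Type*} [Fintype n] (U ρ : Matrix n n ℂ) :
    conjMap U ρ = U * ρ * Uᴴ := rfl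

lemma trace_conjMap {n : Type*} [Fintype n] [DecidableEq n] {U : Matrix n n ℂ}
    (hU : Uᴴ * U = 1) (ρ : Matrix n n ℂ) : (conjMap U ρ).trace = ρ.trace := by
  rw [conjMap_apply, trace_mul_cycle, hU, one_mul]

lemma choiMatrix2_apply (Φ : Matrix (Fin 2) (Fin 2) ℂ →ₗ[ℂ] Matrix (Fin 2) (Fin 2) ℂ)
    (i k j l : Fin 2) : choiMatrix2 Φ (i, k) (j, l) = Φ (single k l 1) i j := by
  fin_cases k <;> fin_cases l <;>
    simp [choiMatrix2, Fin.sum_univ_two, kroneckerMap_apply]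

lemma choiMatrix2_conjMap (U : Matrix (Fin 2) (Fin 2) ℂ) :
    choiMatrix2 (conjMap U) = vecMulVec (fun p => U p.1 p.2) (star fun p => U p.1 p.2) := by
  ext ⟨i, k⟩ ⟨j, l⟩
  fin_cases k <;> fin_cases l <;>
    simp [choiMatrix2_apply, conjMap_apply, vecMulVec_apply, mul_apply]

lemma posSemidef_choiMatrix2_sum_smul_conjMap {ι : Type*} [Fintype ι] (w : ι → ℝ)
    (hw : ∀ i, 0 ≤ w i) (U : ι → Matrix (Fin 2) (Fin 2) ℂ) :
    (choiMatrix2 (∑ i, w i • conjMap (U i))).PosSemidef := by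
  have hsum : choiMatrix2 (∑ i, w i • conjMap (U i)) =
      ∑ i, w i • choiMatrix2 (conjMap (U i)) := by
    ext ⟨a, b⟩ ⟨c, d⟩
    simp [choiMatrix2_apply, Matrix.sum_apply, LinearMap.sum_apply]
  rw [hsum]
  exact posSemidef_sum _ fun i _ =>
    (choiMatrix2_conjMap (U i) ▸ posSemidef_vecMulVec_self_star _).smul (hw i)

lemma trace_sum_smul_conjMap {ι : Type*} [Fintype ι] (w : ι → ℝ) (hw : ∑ i, w i = 1)
    (U : ι → Matrix (Fin 2) (Fin 2) ℂ) (hU : ∀ i, (U i)ᴴ * U i = 1)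
    (ρ : Matrix (Fin 2) (Fin 2) ℂ) :
    ((∑ i, w i • conjMap (U i)) ρ).trace = ρ.trace := by
  simp only [LinearMap.sum_apply, LinearMap.smul_apply, trace_sum, trace_smul,
    trace_conjMap (hU _), ← Finset.sum_smul, hw, one_smul]

lemma hasDerivAt_apply_of_eigenvectors {ι V : Type*} [Fintype ι] [NormedAddCommGroup V]
    [NormedSpace ℂ V] {Λ : ℝ → V →ₗ[ℂ] V} {L : V →ₗ[ℂ] V} {b : ι → V} {f : ι → ℝ → ℝ}
    {μ : ι → ℝ} {t : ℝ} (hΛ : ∀ s i, Λ s (b i) = f i s • b i) (hL : ∀ i, L (b i) = μ i • b i)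
    (hf : ∀ i, HasDerivAt (f i) (μ i * f i t) t) {c : ι → ℂ} {v : V} (hv : ∑ i, c i • b i = v) :
    HasDerivAt (fun s => Λ s v) (L (Λ t v)) t := by
  subst hv
  have hΛv : ∀ s, Λ s (∑ i, c i • b i) = ∑ i, f i s • c i • b i := fun s => by
    simp only [map_sum, map_smul, hΛ, smul_comm (c _)]
  simp only [hΛv, map_sum, LinearMap.map_smul_of_tower, map_smul, hL]
  refine HasDerivAt.fun_sum fun i _ => ((hf i).smul_const (c i • b i)).congr_deriv ?_
  rw [mul_smul, smul_comm (c i) (μ i), smul_comm (f i t) (μ i)]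

lemma mul_mul_self_eq_neg_of_anticomm {R : Type*} [Ring R] {a b : R} (h : a * b = -(b * a))
    (ha : a * a = 1) : a * b * a = -b := by
  rw [h, neg_mul, mul_assoc, ha, mul_one]

lemma sigmaX_mul_self : sigmaX * sigmaX = 1 := by simp [sigmaX, one_fin_two]
lemma sigmaY_mul_self : sigmaY * sigmaY = 1 := by simp [sigmaY, one_fin_two]
lemma sigmaZ_mul_self : sigmaZ * sigmaZ = 1 := by simp [sigmaZ, one_fin_two]
lemma sigmaX_mul_sigmaY : sigmaX * sigmaY = -(sigmaY * sigmaX) := by simp [sigmaX, sigmaY]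
lemma sigmaY_mul_sigmaZ : sigmaY * sigmaZ = -(sigmaZ * sigmaY) := by simp [sigmaY, sigmaZ]
lemma sigmaZ_mul_sigmaX : sigmaZ * sigmaX = -(sigmaX * sigmaZ) := by simp [sigmaZ, sigmaX]

lemma conjTranspose_sigmaX : sigmaXᴴ = sigmaX := by
  ext i j; fin_cases i <;> fin_cases j <;> simp [sigmaX]
lemma conjTranspose_sigmaY : sigmaYᴴ = sigmaY := by
  ext i j; fin_cases i <;> fin_cases j <;> simp [sigmaY]
lemma conjTranspose_sigmaZ : sigmaZᴴ = sigmaZ := by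
  ext i j; fin_cases i <;> fin_cases j <;> simp [sigmaZ]

lemma sigmaX_conj_sigmaY : sigmaX * sigmaY * sigmaX = -sigmaY :=
  mul_mul_self_eq_neg_of_anticomm sigmaX_mul_sigmaY sigmaX_mul_self
lemma sigmaY_conj_sigmaX : sigmaY * sigmaX * sigmaY = -sigmaX :=
  mul_mul_self_eq_neg_of_anticomm (neg_eq_iff_eq_neg.mp sigmaX_mul_sigmaY.symm) sigmaY_mul_self
lemma sigmaY_conj_sigmaZ : sigmaY * sigmaZ * sigmaY = -sigmaZ :=
  mul_mul_self_eq_neg_of_anticomm sigmaY_mul_sigmaZ sigmaY_mul_self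
lemma sigmaZ_conj_sigmaY : sigmaZ * sigmaY * sigmaZ = -sigmaY :=
  mul_mul_self_eq_neg_of_anticomm (neg_eq_iff_eq_neg.mp sigmaY_mul_sigmaZ.symm) sigmaZ_mul_self
lemma sigmaZ_conj_sigmaX : sigmaZ * sigmaX * sigmaZ = -sigmaX :=
  mul_mul_self_eq_neg_of_anticomm sigmaZ_mul_sigmaX sigmaZ_mul_self
lemma sigmaX_conj_sigmaZ : sigmaX * sigmaZ * sigmaX = -sigmaZ :=
  mul_mul_self_eq_neg_of_anticomm (neg_eq_iff_eq_neg.mp sigmaZ_mul_sigmaX.symm) sigmaX_mul_self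

noncomputable def pauli : Fin 4 → Matrix (Fin 2) (Fin 2) ℂ := ![1, sigmaX, sigmaY, sigmaZ]

-- the coefficients `tr (σᵢ ρ) / 2` of `ρ` in the Pauli basis
noncomputable def pauliCoeff (ρ : Matrix (Fin 2) (Fin 2) ℂ) : Fin 4 → ℂ :=
  ![(ρ 0 0 + ρ 1 1) / 2, (ρ 0 1 + ρ 1 0) / 2, Complex.I * (ρ 0 1 - ρ 1 0) / 2,
    (ρ 0 0 - ρ 1 1) / 2]

lemma sum_pauliCoeff_smul_pauli (ρ : Matrix (Fin 2) (Fin 2) ℂ) :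
    ∑ i, pauliCoeff ρ i • pauli i = ρ := by
  ext i j
  fin_cases i <;> fin_cases j <;>
    simp [Fin.sum_univ_four, pauliCoeff, pauli, sigmaX, sigmaY, sigmaZ]
  · ring
  · linear_combination (ρ 1 0 - ρ 0 1) / 2 * Complex.I_sq
  · linear_combination (ρ 0 1 - ρ 1 0) / 2 * Complex.I_sq
  · ring

lemma linearMap_ext_pauli {M : Type*} [AddCommGroup M] [Module ℂ M]
    {Φ Ψ : Matrix (Fin 2) (Fin 2) ℂ →ₗ[ℂ] M} (h : ∀ i, Φ (pauli i) = Ψ (pauli i)) : Φ = Ψ := by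
  ext1 ρ
  rw [← sum_pauliCoeff_smul_pauli ρ]
  simp only [map_sum, map_smul, h]

noncomputable def pauliGenerator (γx γy γz : ℝ) :
    Matrix (Fin 2) (Fin 2) ℂ →ₗ[ℂ] Matrix (Fin 2) (Fin 2) ℂ :=
  γx • (conjMap sigmaX - LinearMap.id) + γy • (conjMap sigmaY - LinearMap.id) +
    γz • (conjMap sigmaZ - LinearMap.id)

lemma pauliGenerator_apply (γx γy γz : ℝ) (ρ : Matrix (Fin 2) (Fin 2) ℂ) :
    pauliGenerator γx γy γz ρ = (γx : ℂ) • (sigmaX * ρ * sigmaX - ρ) +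
      (γy : ℂ) • (sigmaY * ρ * sigmaY - ρ) + (γz : ℂ) • (sigmaZ * ρ * sigmaZ - ρ) := by
  simp [pauliGenerator, conjMap_apply, conjTranspose_sigmaX, conjTranspose_sigmaY,
    conjTranspose_sigmaZ, Complex.coe_smul]

noncomputable def pauliGeneratorEigenvalue (γx γy γz : ℝ) : Fin 4 → ℝ :=
  ![0, -2 * (γy + γz), -2 * (γx + γz), -2 * (γx + γy)]

lemma pauliGenerator_pauli (γx γy γz : ℝ) (i : Fin 4) :
    pauliGenerator γx γy γz (pauli i) = pauliGeneratorEigenvalue γx γy γz i • pauli i := by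
  fin_cases i <;>
    simp only [pauli, pauliGeneratorEigenvalue, pauliGenerator_apply, Fin.isValue, Fin.zero_eta,
      Fin.mk_one, Fin.reduceFinMk, cons_val_zero, cons_val_one, cons_val, Complex.coe_smul, mul_one,
      one_mul, sigmaX_mul_self, sigmaY_mul_self, sigmaZ_mul_self, sigmaX_conj_sigmaY,
      sigmaY_conj_sigmaX, sigmaY_conj_sigmaZ, sigmaZ_conj_sigmaY, sigmaZ_conj_sigmaX,
      sigmaX_conj_sigmaZ] <;>
    module

lemma eq_sum_smul_conjMap_of_pauli {Φ : Matrix (Fin 2) (Fin 2) ℂ →ₗ[ℂ] Matrix (Fin 2) (Fin 2) ℂ}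
    {p : ℝ} (h1 : Φ 1 = 1) (hx : Φ sigmaX = p • sigmaX) (hy : Φ sigmaY = p • sigmaY)
    (hz : Φ sigmaZ = (2 * p - 1) • sigmaZ) :
    Φ = ∑ i, ![p, (1 - p) / 2, (1 - p) / 2] i • conjMap (![1, sigmaX, sigmaY] i) := by
  refine linearMap_ext_pauli fun i => ?_
  fin_cases i <;>
    simp only [pauli, Fin.sum_univ_three, Fin.isValue, Fin.zero_eta, Fin.mk_one, Fin.reduceFinMk,
      cons_val_zero, cons_val_one, cons_val, LinearMap.add_apply, LinearMap.smul_apply,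
      conjMap_apply, h1, hx, hy, hz, mul_one, one_mul, conjTranspose_one, conjTranspose_sigmaX,
      conjTranspose_sigmaY, sigmaX_mul_self, sigmaY_mul_self, sigmaX_conj_sigmaY,
      sigmaY_conj_sigmaX, sigmaY_conj_sigmaZ, sigmaX_conj_sigmaZ] <;>
    module

open Real

lemma exp_neg_mul_cosh (t : ℝ) : exp (-t) * cosh t = (1 + exp (-2 * t)) / 2 := by
  rw [cosh_eq, mul_div_assoc', mul_add, ← exp_add, ← exp_add]
  ring_nf
  rw [exp_zero]
  ring

lemma hasDerivAt_exp_neg_mul_cosh (t : ℝ) :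
    HasDerivAt (fun s => exp (-s) * cosh s) ((tanh t - 1) * (exp (-t) * cosh t)) t := by
  have h := ((hasDerivAt_neg t).exp).mul (hasDerivAt_cosh t)
  refine h.congr_deriv ?_
  rw [tanh_eq_sinh_div_cosh]
  field_simp [(cosh_pos t).ne']
  ring

lemma hasDerivAt_log_cosh (t : ℝ) : HasDerivAt (fun s => log (cosh s)) (tanh t) t := by
  simpa [tanh_eq_sinh_div_cosh] using (hasDerivAt_cosh t).log (cosh_pos t).ne'

lemma integral_tanh (t : ℝ) : ∫ τ in (0 : ℝ)..t, tanh τ = log (cosh t) := by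
  have hcont : Continuous tanh :=
    (continuous_sinh.div continuous_cosh fun x => (cosh_pos x).ne').congr
      fun x => (tanh_eq_sinh_div_cosh x).symm
  rw [intervalIntegral.integral_eq_sub_of_hasDerivAt (fun x _ => hasDerivAt_log_cosh x)
    (hcont.intervalIntegrable 0 t), cosh_zero, log_one, sub_zero]

noncomputable def dampingFactor : Fin 4 → ℝ → ℝ :=
  ![fun _ => 1, fun s => exp (-s) * cosh s, fun s => exp (-s) * cosh s, fun s => exp (-2 * s)]

lemma hasDerivAt_dampingFactor (t : ℝ) (i : Fin 4) :
    HasDerivAt (dampingFactor i)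
      (pauliGeneratorEigenvalue 2⁻¹ 2⁻¹ (-(tanh t / 2)) i * dampingFactor i t) t := by
  fin_cases i <;>
    simp only [dampingFactor, pauliGeneratorEigenvalue, Fin.isValue, Fin.zero_eta, Fin.mk_one,
      Fin.reduceFinMk, cons_val_zero, cons_val_one, cons_val]
  · simpa using hasDerivAt_const t (1 : ℝ)
  · exact (hasDerivAt_exp_neg_mul_cosh t).congr_deriv (by ring)
  · exact (hasDerivAt_exp_neg_mul_cosh t).congr_deriv (by ring)
  · exact ((hasDerivAt_id t).const_mul (-2)).exp.congr_deriv (by simp only [id]; ring)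

/-- The eternally non-Markovian random unitary qubit model with rates
`γ_x = γ_y = ½`, `γ_z(t) = -½ tanh t`: the family `Λ_t` defined on the Pauli
basis by `Λ_t(1) = 1`, `Λ_t(σ_x) = e^{-t} cosh t · σ_x`,
`Λ_t(σ_y) = e^{-t} cosh t · σ_y`, `Λ_t(σ_z) = e^{-2t} σ_z` (i) solves the
master equation with the above rates, (ii) is completely positive and trace
preserving for all `t ≥ 0`, yet (iii) the `z`-rate has strictly negative
integral `∫_0^t (-½ tanh) = -½ log(cosh t) < 0` at all `t > 0` — commutative
dynamics that is physical but not semigroup-simulable. -/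
theorem stmt_15
    (Λ : ℝ → Matrix (Fin 2) (Fin 2) ℂ →ₗ[ℂ] Matrix (Fin 2) (Fin 2) ℂ)
    (hid : ∀ t : ℝ, Λ t 1 = 1)
    (hx : ∀ t : ℝ, Λ t sigmaX = (Real.exp (-t) * Real.cosh t : ℝ) • sigmaX)
    (hy : ∀ t : ℝ, Λ t sigmaY = (Real.exp (-t) * Real.cosh t : ℝ) • sigmaY)
    (hz : ∀ t : ℝ, Λ t sigmaZ = (Real.exp (-2 * t) : ℝ) • sigmaZ) :
    (Λ 0 = LinearMap.id ∧
      ∀ t : ℝ, 0 ≤ t → ∀ ρ : Matrix (Fin 2) (Fin 2) ℂ,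
        HasDerivAt (fun s => Λ s ρ)
          ((2:ℂ)⁻¹ • (sigmaX * Λ t ρ * sigmaX - Λ t ρ) +
            (2:ℂ)⁻¹ • (sigmaY * Λ t ρ * sigmaY - Λ t ρ) -
            ((Real.tanh t / 2 : ℝ) : ℂ) • (sigmaZ * Λ t ρ * sigmaZ - Λ t ρ)) t) ∧
    (∀ t : ℝ, 0 ≤ t → (choiMatrix2 (Λ t)).PosSemidef ∧
      ∀ ρ : Matrix (Fin 2) (Fin 2) ℂ, (Λ t ρ).trace = ρ.trace) ∧
    (∀ t : ℝ, 0 < t →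
      (∫ τ in (0:ℝ)..t, (-(Real.tanh τ) / 2)) = -(Real.log (Real.cosh t)) / 2 ∧
      -(Real.log (Real.cosh t)) / 2 < 0) := by
  have hΛ : ∀ s i, Λ s (pauli i) = dampingFactor i s • pauli i := by
    intro s i
    fin_cases i <;> simp [pauli, dampingFactor, hid, hx, hy, hz]
  have hchannel : ∀ t, Λ t = ∑ i, ![exp (-t) * cosh t, (1 - exp (-t) * cosh t) / 2,
      (1 - exp (-t) * cosh t) / 2] i • conjMap (![1, sigmaX, sigmaY] i) := fun t =>
    eq_sum_smul_conjMap_of_pauli (hid t) (hx t) (hy t) (by rw [hz t, exp_neg_mul_cosh]; ring_nf)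
  refine ⟨⟨linearMap_ext_pauli fun i => ?_, fun t _ ρ => ?_⟩, fun t ht => ⟨?_, fun ρ => ?_⟩,
    fun t ht => ⟨?_, ?_⟩⟩
  · fin_cases i <;> simp [hΛ, dampingFactor]
  · refine (hasDerivAt_apply_of_eigenvectors hΛ (pauliGenerator_pauli _ _ _)
      (hasDerivAt_dampingFactor t) (sum_pauliCoeff_smul_pauli ρ)).congr_deriv ?_
    rw [pauliGenerator_apply]
    push_cast
    module
  · have hp : exp (-t) * cosh t ≤ 1 := by
      rw [exp_neg_mul_cosh]; linarith [exp_le_one_iff.mpr (by linarith : -2 * t ≤ 0)]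
    rw [hchannel]
    refine posSemidef_choiMatrix2_sum_smul_conjMap _ (fun i => ?_) _
    fin_cases i <;> simp only [Fin.isValue, Fin.zero_eta, Fin.mk_one, Fin.reduceFinMk,
      cons_val_zero, cons_val_one, cons_val] <;> positivity
  · rw [hchannel]
    refine trace_sum_smul_conjMap _ ?_ _ (fun i => ?_) ρ
    · simp only [Fin.sum_univ_three, Fin.isValue, cons_val_zero, cons_val_one, cons_val]
      ring
    · fin_cases i <;>
        simp [conjTranspose_sigmaX, conjTranspose_sigmaY, sigmaX_mul_self, sigmaY_mul_self]
  · rw [intervalIntegral.integral_div, intervalIntegral.integral_neg, integral_tanh]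
  · have := log_pos (one_lt_cosh.mpr ht.ne')
    linarith
end
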